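/- Let z₁, …, z_n ∈ ℂ^n be ℝ-linearly independent with real span E ⊂ ℂ^n ≅ ℝ^{2n}, and write z_j = x_j + i y_j with x_j, y_j ∈ ℝ^n. Then |z₁ ∧_ℂ ⋯ ∧_ℂ z_n| = ‖(x₁,y₁) ∧ ⋯ ∧ (x_n,y_n)‖ · σ^J(E)^{1/2}, where σ^J(E) = |e₁∧⋯∧e_n∧Je₁∧⋯∧Je_n| for any orthonormal basis e₁,…,e_n of E. -/

import Mathlib

/-!
Since `span_ℝ z ⊆ span_ℝ e`, we can write `z = e A` for a real matrix `A`. Then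
`det_ℂ z = det_ℂ e · det A`; the real Gram matrix of `z` is `Aᵀ A` because `e` is
real-orthonormal; and the realification of `e` has determinant `|det_ℂ e|²`, by the identity
`det((X, -Y), (Y, X)) = det(X + iY) · det(X - iY)`, which comes from conjugating by the block
unipotent matrices `((1, ±i), (0, 1))`.
-/

open Matrix Complex

section

variable {m : Type*} [Fintype m] [DecidableEq m]

theorem Matrix.det_fromBlocks_eq_det_add_I_smul_mul_det_sub_I_smul (X Y : Matrix m m ℂ) :
    (fromBlocks X (-Y) Y X).det = (X + I • Y).det * (X - I • Y).det := by
  have hconj : fromBlocks 1 (I • 1) 0 1 * fromBlocks X (-Y) Y X * fromBlocks 1 (-I • 1) 0 1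
      = fromBlocks (X + I • Y) 0 Y (X - I • Y) := by
    simp only [fromBlocks_multiply, Matrix.one_mul, Matrix.mul_one, Matrix.zero_mul,
      Matrix.mul_zero, Matrix.smul_mul, Matrix.mul_smul]
    congr 1 <;> match_scalars <;> simp
  have hunit (c : ℂ) : (fromBlocks 1 (c • 1 : Matrix m m ℂ) 0 1).det = 1 := by
    rw [det_fromBlocks_zero₂₁]; simp
  simpa [det_mul, hunit, det_fromBlocks_zero₁₂] using congrArg det hconj

theorem Matrix.det_fromBlocks_re_im (W : Matrix m m ℂ) :
    (fromBlocks (W.map re) (-W.map im) (W.map im) (W.map re)).det = normSq W.det := by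
  apply ofReal_injective
  have hW : (W.map re).map ofRealHom + I • (W.map im).map ofRealHom = W := by
    ext r j; simp [Complex.ext_iff]
  have hW' : (W.map re).map ofRealHom - I • (W.map im).map ofRealHom =
      (starRingEnd ℂ).mapMatrix W := by
    ext r j; simp [Complex.ext_iff]
  rw [← ofRealHom_eq_coe, RingHom.map_det, RingHom.mapMatrix_apply, fromBlocks_map,
    Matrix.map_neg _ (map_neg ofRealHom), det_fromBlocks_eq_det_add_I_smul_mul_det_sub_I_smul,
    hW, hW', ← RingHom.map_det, mul_conj]

end

section

variable {ι : Type*} [Fintype ι]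

theorem exists_matrix_eq_sum_smul_of_span_le {R E : Type*} [Semiring R] [AddCommMonoid E]
    [Module R E] {e z : ι → E}
    (h : Submodule.span R (Set.range z) ≤ Submodule.span R (Set.range e)) :
    ∃ A : Matrix ι ι R, ∀ j, z j = ∑ k, A k j • e k := by
  have hmem (j : ι) : z j ∈ Submodule.span R (Set.range e) :=
    h (Submodule.subset_span ⟨j, rfl⟩)
  choose c hc using fun j => (Submodule.mem_span_range_iff_exists_fun R).mp (hmem j)
  exact ⟨of fun k j => c j k, fun j => (hc j).symm⟩

theorem Matrix.map_re_gram_of_eq_sum_smul {E : Type*} [SeminormedAddCommGroup E]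
    [InnerProductSpace ℂ E] {e z : ι → E} (A : Matrix ι ι ℝ)
    (hz : ∀ j, z j = ∑ k, A k j • e k) :
    (gram ℂ z).map re = Aᵀ * (gram ℂ e).map re * A := by
  ext a b
  simp only [map_apply, gram_apply, hz, mul_apply, transpose_apply, Finset.sum_mul,
    sum_inner, inner_sum, ← Complex.coe_smul, inner_smul_left, inner_smul_right, conj_ofReal,
    Finset.mul_sum, re_sum, ← mul_assoc, ← ofReal_mul, re_ofReal_mul]
  exact Finset.sum_congr rfl fun _ _ => Finset.sum_congr rfl fun _ _ => by ring

theorem Matrix.of_coords_eq_mul_map_ofReal {e z : ι → EuclideanSpace ℂ ι}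
    (A : Matrix ι ι ℝ) (hz : ∀ j, z j = ∑ k, A k j • e k) :
    (of fun r j => z j r) = (of fun r j => e j r) * A.map ofReal := by
  ext r j
  simp [hz, mul_apply, mul_comm]

end

theorem stmt19 {n : ℕ} (z : Fin n → EuclideanSpace ℂ (Fin n))
    (e : Fin n → EuclideanSpace ℂ (Fin n))
    (he : ∀ i j, ((inner ℂ (e i) (e j) : ℂ)).re = if i = j then 1 else 0)
    (hspan : Submodule.span ℝ (Set.range e) = Submodule.span ℝ (Set.range z)) :
    ‖(Matrix.of fun r j => z j r).det‖
      = Real.sqrt ((Matrix.of fun a b : Fin n => ((inner ℂ (z a) (z b) : ℂ)).re).det) *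
        Real.sqrt |(Matrix.of fun (r c : Fin n ⊕ Fin n) =>
            match r, c with
            | Sum.inl r, Sum.inl j => (e j r).re
            | Sum.inr r, Sum.inl j => (e j r).im
            | Sum.inl r, Sum.inr j => -(e j r).im
            | Sum.inr r, Sum.inr j => (e j r).re).det| := by
  obtain ⟨A, hA⟩ := exists_matrix_eq_sum_smul_of_span_le hspan.ge
  set W : Matrix (Fin n) (Fin n) ℂ := of fun r j => e j r
  have hgram_e : (gram ℂ e).map re = 1 := by
    ext i j
    simp [he, one_apply]
  have hgram_z : (of fun a b => (inner ℂ (z a) (z b)).re) = Aᵀ * A := by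
    rw [← Matrix.mul_one Aᵀ, ← hgram_e]
    exact map_re_gram_of_eq_sum_smul A hA
  have hrealify : (of fun (r c : Fin n ⊕ Fin n) =>
            match r, c with
            | Sum.inl r, Sum.inl j => (e j r).re
            | Sum.inr r, Sum.inl j => (e j r).im
            | Sum.inl r, Sum.inr j => -(e j r).im
            | Sum.inr r, Sum.inr j => (e j r).re)
      = fromBlocks (W.map re) (-W.map im) (W.map im) (W.map re) := by
    ext (r | r) (c | c) <;> rfl
  have hdetA : (A.map ofReal).det = A.det := (ofRealHom.map_det A).symm
  rw [Matrix.of_coords_eq_mul_map_ofReal A hA, hgram_z, hrealify, det_fromBlocks_re_im,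
    det_mul, det_mul, det_transpose, hdetA, norm_mul, ← sq, Real.sqrt_sq_eq_abs,
    abs_of_nonneg (normSq_nonneg _), ← norm_def, norm_real, Real.norm_eq_abs,
    mul_comm]
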